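/- arXiv:1302.0359 — 8 statements merged into one kernel-verified Lean document; each statement's English description precedes it below -/
import Mathlib

section
/- Let m ≥ 1 be an integer and let q be a power of 2. Then q^m < M_m(q) ≤ (q^{m+1} - 1)/(q - 1). -/
/-!
Most branches rest on one estimate: for `A, B ≥ 2` with `A + B = m + 1`, the number
`(q^A - 1)(q^B - 1) = q^(m+1) - q^A - q^B + 1` lies between `(q^m + 1)(q - 1)` and `q^(m+1) - 1`,
because `q^A + q^B ≤ q^(m-1) + q^2` (as `(q^(A-2) - 1)(q^(B-2) - 1) ≥ 0`). The branches with an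
extra factor `q` apply it to `m - 1`. For odd `m`, the product of the `q^(2^i) + 1` over the binary
digits of `m` expands into distinct powers `q^k` with `k ≤ m`, among them `1` and `q^m`, so it
exceeds `q^m` and is at most `1 + q + ⋯ + q^m`.
-/

/-- `Mm m q` is the function `M_m(q)` from Definition 1.2 of the paper. -/
def Mm (m q : ℕ) : ℕ :=
  if q = 2 then
    -- `L` is the largest positive integer `ℓ` with `2^ℓ - 1 ≤ m`
    let L := Nat.findGreatest (fun l => 0 < l ∧ 2 ^ l - 1 ≤ m) m
    let m0 := m - (2 ^ L - 1)
    if m0 ≤ 3 then q ^ m0 * (q ^ 2 ^ L - 1)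
    else if m0 < 2 ^ (L - 1) then
      if Odd m0 then (q ^ (2 ^ (L - 1) + m0) - 1) * (q ^ 2 ^ (L - 1) - 1)
      else q * (q ^ (2 ^ (L - 1) + m0 - 1) - 1) * (q ^ 2 ^ (L - 1) - 1)
    else if m0 = 2 ^ (L - 1) then (q ^ 2 ^ L + 1) * (q ^ 2 ^ (L - 1) - 1)
    else if Odd m0 then (q ^ m0 - 1) * (q ^ 2 ^ L - 1)
    else q * (q ^ (m0 - 1) - 1) * (q ^ 2 ^ L - 1)
  else if Odd m then
    -- the product of `q^(2^i) + 1` over the summands `2^i` of the 2-adic expansion of `m`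
    ∏ i ∈ Finset.range (m + 1), if m.testBit i then q ^ 2 ^ i + 1 else 1
  else if m = 2 then q ^ 2 + 1
  else
    -- `L` is the largest positive integer `ℓ` with `2^ℓ + 2^(ℓ-1) ≤ m`
    let L := Nat.findGreatest (fun l => 0 < l ∧ 2 ^ l + 2 ^ (l - 1) ≤ m) m
    (q ^ (m - 2 ^ L + 1) - 1) * (q ^ 2 ^ L - 1) / (q - 1)


theorem pow_sub_one_mul_pow_sub_one_le (q A B : ℕ) :
    (q ^ A - 1) * (q ^ B - 1) ≤ q ^ (A + B) - 1 := by
  rw [pow_add]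
  generalize q ^ A = x
  generalize q ^ B = y
  rcases x with _ | x
  · simp
  rcases y with _ | y
  · simp
  simp only [Nat.add_sub_cancel, Nat.add_mul, Nat.mul_add]
  omega

theorem sub_one_mul_add_one_le_mul_sub_one {x y : ℕ} (hx : 1 ≤ x) (hxy : x ≤ y) :
    (x - 1) * (y + 1) ≤ x * y - 1 := by
  obtain ⟨x, rfl⟩ := Nat.exists_eq_add_of_le' hx
  simp only [Nat.add_sub_cancel, Nat.add_mul, Nat.mul_add]
  omega

theorem pow_add_pow_le_pow_add_add_one {q : ℕ} (hq : 1 ≤ q) (a b : ℕ) :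
    q ^ a + q ^ b ≤ q ^ (a + b) + 1 := by
  have ha := Nat.one_le_pow a q hq
  have hb := Nat.one_le_pow b q hq
  rw [pow_add]
  nlinarith

theorem pow_add_one_mul_sub_one_le_pow_sub_one_mul_pow_sub_one {q A B m : ℕ} (hq : 2 ≤ q)
    (hA : 2 ≤ A) (hB : 2 ≤ B) (hAB : A + B = m + 1) :
    (q ^ m + 1) * (q - 1) ≤ (q ^ A - 1) * (q ^ B - 1) := by
  obtain ⟨a, rfl⟩ := Nat.exists_eq_add_of_le' hA
  obtain ⟨b, rfl⟩ := Nat.exists_eq_add_of_le' hB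
  obtain rfl : m = a + b + 3 := by omega
  have hsum : q ^ (a + 2) + q ^ (b + 2) ≤ q ^ (a + b + 2) + q ^ 2 :=
    calc q ^ (a + 2) + q ^ (b + 2) = (q ^ a + q ^ b) * q ^ 2 := by ring
      _ ≤ (q ^ (a + b) + 1) * q ^ 2 :=
        Nat.mul_le_mul_right _ (pow_add_pow_le_pow_add_add_one (by omega) a b)
      _ = q ^ (a + b + 2) + q ^ 2 := by ring
  have hbig : q ^ 2 ≤ q ^ (a + b + 2) := Nat.pow_le_pow_right (by omega) (by omega)
  have h1 := Nat.one_le_pow (a + 2) q (by omega)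
  have h2 := Nat.one_le_pow (b + 2) q (by omega)
  -- expanded, the claim is `q^A + q^B + q ≤ q^m + 2`; by `hsum` it reduces to `q + 2 ≤ q^(m-1)`
  zify [h1, h2, (by omega : 1 ≤ q)] at hsum hbig ⊢
  have e1 : (q : ℤ) ^ (a + b + 3) = q ^ (a + b + 2) * q := by ring
  have e2 : (q : ℤ) ^ (a + 2) * q ^ (b + 2) = q ^ (a + b + 2) * q ^ 2 := by ring
  nlinarith

theorem pow_sub_one_mul_pow_sub_one_bounds {q A B m : ℕ} (hq : 2 ≤ q)
    (hA : 2 ≤ A) (hB : 2 ≤ B) (hAB : A + B = m + 1) :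
    q ^ m < (q ^ A - 1) * (q ^ B - 1) ∧ (q ^ A - 1) * (q ^ B - 1) ≤ q ^ (m + 1) - 1 := by
  refine ⟨?_, hAB ▸ pow_sub_one_mul_pow_sub_one_le q A B⟩
  calc q ^ m < q ^ m + 1 := Nat.lt_succ_self _
    _ ≤ (q ^ m + 1) * (q - 1) := Nat.le_mul_of_pos_right _ (by omega)
    _ ≤ (q ^ A - 1) * (q ^ B - 1) :=
      pow_add_one_mul_sub_one_le_pow_sub_one_mul_pow_sub_one hq hA hB hAB

theorem pow_sub_one_mul_pow_sub_one_div_bounds {q A B m : ℕ} (hq : 2 ≤ q)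
    (hA : 2 ≤ A) (hB : 2 ≤ B) (hAB : A + B = m + 1) :
    q ^ m < (q ^ A - 1) * (q ^ B - 1) / (q - 1) ∧
      (q ^ A - 1) * (q ^ B - 1) / (q - 1) ≤ (q ^ (m + 1) - 1) / (q - 1) := by
  refine ⟨?_, Nat.div_le_div_right (hAB ▸ pow_sub_one_mul_pow_sub_one_le q A B)⟩
  rw [Nat.lt_iff_add_one_le, Nat.le_div_iff_mul_le (by omega)]
  exact pow_add_one_mul_sub_one_le_pow_sub_one_mul_pow_sub_one hq hA hB hAB

theorem mul_pow_sub_one_mul_pow_sub_one_bounds {q A B m : ℕ} (hq : 2 ≤ q)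
    (hA : 2 ≤ A) (hB : 2 ≤ B) (hAB : A + B = m) :
    q ^ m < q * (q ^ A - 1) * (q ^ B - 1) ∧
      q * (q ^ A - 1) * (q ^ B - 1) ≤ q ^ (m + 1) - 1 := by
  obtain ⟨k, rfl⟩ : ∃ k, m = k + 1 := ⟨m - 1, by omega⟩
  constructor
  · calc q ^ (k + 1) < q ^ (k + 1) + q := by omega
      _ ≤ (q ^ (k + 1) + q) * (q - 1) := Nat.le_mul_of_pos_right _ (by omega)
      _ = q * ((q ^ k + 1) * (q - 1)) := by ring
      _ ≤ q * ((q ^ A - 1) * (q ^ B - 1)) := Nat.mul_le_mul_left _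
          (pow_add_one_mul_sub_one_le_pow_sub_one_mul_pow_sub_one hq hA hB hAB)
      _ = q * (q ^ A - 1) * (q ^ B - 1) := by ring
  · calc q * (q ^ A - 1) * (q ^ B - 1) ≤ q * (q ^ (k + 1) - 1) := by
          rw [mul_assoc, ← hAB]
          exact Nat.mul_le_mul_left _ (pow_sub_one_mul_pow_sub_one_le q A B)
      _ = q ^ (k + 1 + 1) - q := by rw [Nat.mul_sub_one, pow_succ' q (k + 1)]
      _ ≤ q ^ (k + 1 + 1) - 1 := Nat.sub_le_sub_left (by omega) _

theorem pow_mul_pow_sub_one_bounds {q a b m : ℕ} (hq : 2 ≤ q) (hab : a + b = m + 1)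
    (ha : a < m) : q ^ m < q ^ a * (q ^ b - 1) ∧ q ^ a * (q ^ b - 1) ≤ q ^ (m + 1) - 1 := by
  have hlt : q ^ a < q ^ m := Nat.pow_lt_pow_right hq ha
  have hle : q ^ m * 2 ≤ q ^ m * q := Nat.mul_le_mul_left _ hq
  rw [Nat.mul_sub_one, ← pow_add, hab, pow_succ]
  have hpos := Nat.one_le_pow a q (by omega)
  generalize q ^ m * q = Q at hle ⊢
  omega

theorem pow_two_mul_add_one_mul_pow_sub_one_bounds {q c m : ℕ} (hq : 2 ≤ q) (hc : 1 ≤ c)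
    (hm : m + 1 = 3 * c) :
    q ^ m < (q ^ (2 * c) + 1) * (q ^ c - 1) ∧
      (q ^ (2 * c) + 1) * (q ^ c - 1) ≤ q ^ (m + 1) - 1 := by
  have hx : q ≤ q ^ c := Nat.le_self_pow (by omega) q
  have hqm : q * q ^ m = (q ^ c) ^ 3 := by rw [← pow_succ', hm, pow_mul']
  rw [hm, mul_comm 2 c, mul_comm 3 c, pow_mul, pow_mul]
  generalize q ^ c = x at hx hqm ⊢
  have hx3 : 1 ≤ x ^ 3 := Nat.one_le_pow _ _ (by omega)
  zify [(by omega : 1 ≤ x), hx3] at hx hqm ⊢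
  constructor
  · -- as `q * q ^ m = x³`, it suffices that
    -- `q(x² + 1)(x - 1) - x³ = x²((q - 1)x - q) + q(x - 1) > 0`
    have hcoef : (0 : ℤ) ≤ (q - 1) * x - q := by nlinarith
    have key : (q : ℤ) * q ^ m < q * ((x ^ 2 + 1) * (x - 1)) := by
      nlinarith [mul_nonneg (sq_nonneg (x : ℤ)) hcoef]
    exact lt_of_mul_lt_mul_left key (by positivity)
  · nlinarith

theorem findGreatest_two_pow_sub_one_spec {m : ℕ} (hm : 1 ≤ m) :
    0 < Nat.findGreatest (fun l => 0 < l ∧ 2 ^ l - 1 ≤ m) m ∧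
      2 ^ Nat.findGreatest (fun l => 0 < l ∧ 2 ^ l - 1 ≤ m) m ≤ m + 1 ∧
      m + 1 < 2 ^ (Nat.findGreatest (fun l => 0 < l ∧ 2 ^ l - 1 ≤ m) m + 1) := by
  set L := Nat.findGreatest (fun l => 0 < l ∧ 2 ^ l - 1 ≤ m) m
  obtain ⟨hL, hLm⟩ : 0 < L ∧ 2 ^ L - 1 ≤ m :=
    Nat.findGreatest_spec (P := fun l => 0 < l ∧ 2 ^ l - 1 ≤ m) hm ⟨one_pos, by omega⟩
  refine ⟨hL, by omega, ?_⟩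
  by_cases hLm' : L + 1 ≤ m
  · have := Nat.findGreatest_is_greatest (Nat.lt_succ_self L) hLm'
    simp only [not_and, not_le] at this
    have := this (Nat.succ_pos L)
    omega
  · calc m + 1 < 2 ^ (m + 1) := Nat.lt_two_pow_self
      _ ≤ 2 ^ (L + 1) := Nat.pow_le_pow_right (by omega) (by omega)

def bitProd (q m n : ℕ) : ℕ :=
  ∏ i ∈ Finset.range n, if m.testBit i then q ^ 2 ^ i + 1 else 1

theorem bitProd_succ (q m n : ℕ) :
    bitProd q m (n + 1) = bitProd q m n * if m.testBit n then q ^ 2 ^ n + 1 else 1 :=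
  Finset.prod_range_succ _ _

theorem mod_two_pow_succ_eq (m n : ℕ) :
    m % 2 ^ (n + 1) = (if m.testBit n then 2 ^ n else 0) + m % 2 ^ n := by
  rw [Nat.mod_pow_succ, ← Nat.toNat_testBit, add_comm]
  cases m.testBit n <;> simp

theorem pow_mod_le_bitProd (q m n : ℕ) : q ^ (m % 2 ^ n) ≤ bitProd q m n := by
  induction n with
  | zero => simp [bitProd, Nat.mod_one]
  | succ n ih =>
    rw [bitProd_succ, mod_two_pow_succ_eq]
    split_ifs
    · rw [pow_add, mul_comm]
      exact Nat.mul_le_mul ih (Nat.le_succ _)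
    · simpa using ih

theorem pow_mod_lt_bitProd {q : ℕ} (hq : 1 ≤ q) (m : ℕ) {n : ℕ} (hn : m % 2 ^ n ≠ 0) :
    q ^ (m % 2 ^ n) < bitProd q m n := by
  induction n with
  | zero => simp [Nat.mod_one] at hn
  | succ n ih =>
    rw [bitProd_succ, mod_two_pow_succ_eq] at *
    split_ifs at * with hbit
    · have hle := pow_mod_le_bitProd q m n
      have hP : 0 < bitProd q m n := (Nat.one_le_pow _ _ hq).trans hle
      rw [pow_add, mul_comm]
      calc q ^ (m % 2 ^ n) * q ^ 2 ^ n ≤ bitProd q m n * q ^ 2 ^ n := Nat.mul_le_mul_right _ hle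
        _ < bitProd q m n * (q ^ 2 ^ n + 1) := Nat.mul_lt_mul_of_pos_left (Nat.lt_succ_self _) hP
    · simpa using ih (by simpa using hn)

theorem bitProd_mul_sub_one_le {q : ℕ} (hq : 1 ≤ q) (m n : ℕ) :
    bitProd q m n * (q - 1) ≤ q ^ (m % 2 ^ n + 1) - 1 := by
  induction n with
  | zero => simp [bitProd, Nat.mod_one]
  | succ n ih =>
    rw [bitProd_succ, mod_two_pow_succ_eq]
    split_ifs
    · have hlt : m % 2 ^ n < 2 ^ n := Nat.mod_lt _ (by positivity)
      calc bitProd q m n * (q ^ 2 ^ n + 1) * (q - 1)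
          = bitProd q m n * (q - 1) * (q ^ 2 ^ n + 1) := by ring
        _ ≤ (q ^ (m % 2 ^ n + 1) - 1) * (q ^ 2 ^ n + 1) := Nat.mul_le_mul_right _ ih
        _ ≤ q ^ (m % 2 ^ n + 1) * q ^ 2 ^ n - 1 :=
            sub_one_mul_add_one_le_mul_sub_one (Nat.one_le_pow _ _ hq)
              (Nat.pow_le_pow_right hq hlt)
        _ = q ^ (2 ^ n + m % 2 ^ n + 1) - 1 := by ring_nf
    · simpa using ih

theorem bitProd_bounds {q m : ℕ} (hq : 2 ≤ q) (hm : m ≠ 0) :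
    q ^ m < bitProd q m (m + 1) ∧ bitProd q m (m + 1) ≤ (q ^ (m + 1) - 1) / (q - 1) := by
  have hmod : m % 2 ^ (m + 1) = m :=
    Nat.mod_eq_of_lt (Nat.lt_two_pow_self.trans (Nat.pow_lt_pow_right one_lt_two m.lt_succ_self))
  have hlt := pow_mod_lt_bitProd (by omega : 1 ≤ q) m (n := m + 1) (by rwa [hmod])
  have hle := bitProd_mul_sub_one_le (by omega : 1 ≤ q) m (m + 1)
  rw [hmod] at hlt hle
  exact ⟨hlt, (Nat.le_div_iff_mul_le (by omega)).2 hle⟩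

theorem Mm_two_bounds {m : ℕ} (hm : 1 ≤ m) : 2 ^ m < Mm m 2 ∧ Mm m 2 ≤ 2 ^ (m + 1) - 1 := by
  obtain ⟨hL, hLle, hLlt⟩ := findGreatest_two_pow_sub_one_spec hm
  rw [Mm, if_pos rfl]
  dsimp only
  set L := Nat.findGreatest (fun l => 0 < l ∧ 2 ^ l - 1 ≤ m) m
  set m0 := m - (2 ^ L - 1)
  have hhalf : 2 ^ L = 2 * 2 ^ (L - 1) := by rw [← pow_succ']; congr 1; omega
  have hsum : m0 + 2 ^ L = m + 1 := by omega
  split_ifs with hsmall hbelow hodd hmid hodd'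
  · exact pow_mul_pow_sub_one_bounds le_rfl hsum (by omega)
  · exact pow_sub_one_mul_pow_sub_one_bounds le_rfl (by omega) (by omega) (by omega)
  · exact mul_pow_sub_one_mul_pow_sub_one_bounds le_rfl (by omega) (by omega) (by omega)
  · rw [hhalf]
    exact pow_two_mul_add_one_mul_pow_sub_one_bounds le_rfl (by omega) (by omega)
  · exact pow_sub_one_mul_pow_sub_one_bounds le_rfl (by omega) (by omega) hsum
  · exact mul_pow_sub_one_mul_pow_sub_one_bounds le_rfl (by omega) (by omega) (by omega)

/-- Lemma 1.3, first part: q^m < M_m(q) ≤ (q^(m+1) - 1)/(q - 1). -/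
theorem Mm_bounds (f q m : ℕ) (hf : 1 ≤ f) (hq : q = 2 ^ f) (hm : 1 ≤ m) :
    q ^ m < Mm m q ∧ Mm m q ≤ (q ^ (m + 1) - 1) / (q - 1) := by
  have hq2 : 2 ≤ q := hq ▸ Nat.le_self_pow (by omega) 2
  rcases eq_or_ne q 2 with rfl | hq_ne
  · simpa using Mm_two_bounds hm
  rw [Mm, if_neg hq_ne]
  split_ifs with hodd hm2
  · exact bitProd_bounds hq2 (by omega)
  · subst hm2
    refine ⟨by omega, (Nat.le_div_iff_mul_le (by omega)).2 ?_⟩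
    have := sub_one_mul_add_one_le_mul_sub_one (by omega : 1 ≤ q)
      (Nat.le_self_pow two_ne_zero q)
    rwa [mul_comm, ← pow_succ'] at this
  · have hm4 : 4 ≤ m := by have := Nat.even_iff.1 (Nat.not_odd_iff_even.1 hodd); omega
    set L := Nat.findGreatest (fun l => 0 < l ∧ 2 ^ l + 2 ^ (l - 1) ≤ m) m
    obtain ⟨hL, hLm⟩ : 0 < L ∧ 2 ^ L + 2 ^ (L - 1) ≤ m :=
      Nat.findGreatest_spec (P := fun l => 0 < l ∧ 2 ^ l + 2 ^ (l - 1) ≤ m) hm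
        ⟨one_pos, by omega⟩
    have := Nat.one_le_two_pow (n := L - 1)
    exact pow_sub_one_mul_pow_sub_one_div_bounds hq2 (by omega)
      (Nat.le_self_pow hL.ne' 2) (by omega)
end

section
/- Let q be a power of 2 and let d_1, ..., d_ℓ be positive integers such that the 2-adic valuations (d_1)_2, ..., (d_ℓ)_2 are pairwise distinct. Let 2^{x_1} + ... + 2^{x_t} be the 2-adic expansion of d_1 + ... + d_ℓ (with x_1, ..., x_t pairwise distinct). Then ∏_{i=1}^{ℓ} (q^{d_i} + 1) ≤ ∏_{j=1}^{t} (q^{2^{x_j}} + 1). -/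
/-!
Induct on the `d i`, splitting off the one of least 2-adic valuation `v`: write it as
`2 ^ v + a` with `2 ^ (v + 1) ∣ a`; the sum `b` of the others is also divisible by `2 ^ (v + 1)`.
Expanding `∏ (q ^ 2 ^ k + 1)` over the binary digits `k` of `b` as `∑ q ^ m` over the
submasks `m` of `b`, the product `(q ^ (2 ^ v + a) + 1) * ∏` becomes a sum of powers of `q`
with pairwise distinct exponents (those `≡ 2 ^ v` mod `2 ^ (v + 1)` are the `2 ^ v + a + m`):
the top one is `2 ^ v + a + b` and, if `a ≠ 0`, all others are `< a + b` (if `a = 0` there is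
equality throughout). For `q ≥ 2` it is therefore at most
`q ^ (2 ^ v + a + b) + q ^ (a + b) ≤ (q ^ 2 ^ v + 1) * (q ^ (a + b) + 1)`, and this is bounded by
the product over the binary digits of `2 ^ v + a + b`, which are `v` and those of `a + b`.
-/

open Finset

def twoAdicProd (q n : ℕ) : ℕ := ∏ k ∈ n.bitIndices.toFinset, (q ^ 2 ^ k + 1)

def submasks (n : ℕ) : Finset ℕ :=
  n.bitIndices.toFinset.powerset.image fun T ↦ ∑ k ∈ T, 2 ^ k

theorem twoAdicProd_sum_two_pow (q : ℕ) (s : Finset ℕ) :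
    twoAdicProd q (∑ k ∈ s, 2 ^ k) = ∏ k ∈ s, (q ^ 2 ^ k + 1) := by
  rw [twoAdicProd, toFinset_bitIndices_sum_two_pow]

theorem le_of_two_pow_dvd_of_mem_bitIndices {m n k : ℕ} (h : 2 ^ m ∣ n)
    (hk : k ∈ n.bitIndices) : m ≤ k := by
  obtain ⟨c, rfl⟩ := h
  rw [Nat.bitIndices_two_pow_mul] at hk
  obtain ⟨j, -, rfl⟩ := List.mem_map.mp hk
  omega

theorem twoAdicProd_two_pow_add (q : ℕ) {v n : ℕ} (hn : 2 ^ (v + 1) ∣ n) :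
    twoAdicProd q (2 ^ v + n) = (q ^ 2 ^ v + 1) * twoAdicProd q n := by
  have hv : v ∉ n.bitIndices.toFinset := fun hv ↦ by
    have := le_of_two_pow_dvd_of_mem_bitIndices hn (List.mem_toFinset.mp hv)
    omega
  have hsum : 2 ^ v + n = ∑ k ∈ insert v n.bitIndices.toFinset, 2 ^ k := by
    rw [sum_insert hv, sum_toFinset_bitIndices_two_pow]
  rw [hsum, twoAdicProd_sum_two_pow, prod_insert hv, twoAdicProd]

theorem twoAdicProd_eq_sum_submasks (q n : ℕ) :
    twoAdicProd q n = ∑ m ∈ submasks n, q ^ m := by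
  rw [twoAdicProd, prod_add_one, submasks,
    sum_image fun S _ T _ h ↦ geomSum_injective le_rfl h]
  exact sum_congr rfl fun T _ ↦ prod_pow_eq_pow_sum T _ q

theorem mem_submasks {m n : ℕ} :
    m ∈ submasks n ↔ ∃ T ⊆ n.bitIndices.toFinset, ∑ k ∈ T, 2 ^ k = m := by
  simp [submasks]

theorem zero_mem_submasks (n : ℕ) : 0 ∈ submasks n :=
  mem_submasks.mpr ⟨∅, by simp⟩

theorem self_mem_submasks (n : ℕ) : n ∈ submasks n :=
  mem_submasks.mpr ⟨_, subset_rfl, sum_toFinset_bitIndices_two_pow n⟩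

theorem le_of_mem_submasks {m n : ℕ} (hm : m ∈ submasks n) : m ≤ n := by
  obtain ⟨T, hT, rfl⟩ := mem_submasks.mp hm
  exact (sum_le_sum_of_subset hT).trans_eq (sum_toFinset_bitIndices_two_pow n)

theorem two_pow_dvd_of_mem_submasks {v m n : ℕ} (hn : 2 ^ v ∣ n) (hm : m ∈ submasks n) :
    2 ^ v ∣ m := by
  obtain ⟨T, hT, rfl⟩ := mem_submasks.mp hm
  exact dvd_sum fun k hk ↦
    pow_dvd_pow 2 (le_of_two_pow_dvd_of_mem_bitIndices hn (List.mem_toFinset.mp (hT hk)))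

theorem add_two_pow_le_of_mem_submasks {v m n : ℕ} (hn : 2 ^ v ∣ n) (hm : m ∈ submasks n)
    (hmn : m ≠ n) : m + 2 ^ v ≤ n := by
  obtain ⟨T, hT, rfl⟩ := mem_submasks.mp hm
  have hTne : T ≠ n.bitIndices.toFinset := by
    rintro rfl
    exact hmn (sum_toFinset_bitIndices_two_pow n)
  obtain ⟨k, hk, hkT⟩ := exists_of_ssubset (ssubset_of_subset_of_ne hT hTne)
  have hvk : 2 ^ v ≤ 2 ^ k :=
    Nat.pow_le_pow_right two_pos (le_of_two_pow_dvd_of_mem_bitIndices hn (List.mem_toFinset.mp hk))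
  calc ∑ k ∈ T, 2 ^ k + 2 ^ v ≤ ∑ j ∈ insert k T, 2 ^ j := by rw [sum_insert hkT]; omega
    _ ≤ ∑ j ∈ n.bitIndices.toFinset, 2 ^ j := sum_le_sum_of_subset (insert_subset hk hT)
    _ = n := sum_toFinset_bitIndices_two_pow n

theorem pow_add_one_le_twoAdicProd (q : ℕ) {n : ℕ} (hn : n ≠ 0) :
    q ^ n + 1 ≤ twoAdicProd q n := by
  rw [twoAdicProd_eq_sum_submasks]
  calc q ^ n + 1 = ∑ m ∈ {n, 0}, q ^ m := by rw [sum_pair hn, pow_zero]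
    _ ≤ ∑ m ∈ submasks n, q ^ m :=
      sum_le_sum_of_subset (insert_subset (self_mem_submasks n)
        (singleton_subset_iff.mpr (zero_mem_submasks n)))

theorem two_pow_succ_dvd_sub_ordProj {n : ℕ} (hn : n ≠ 0) :
    2 ^ (n.factorization 2 + 1) ∣ n - 2 ^ n.factorization 2 := by
  set v := n.factorization 2
  obtain ⟨c, hc⟩ : Odd (n / 2 ^ v) := (Nat.coprime_ordCompl Nat.prime_two hn).odd_of_left
  have hn' : 2 ^ v * (2 * c + 1) = n := hc ▸ Nat.ordProj_mul_ordCompl_eq_self n 2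
  exact ⟨c, Nat.sub_eq_of_eq_add (by rw [← hn']; ring)⟩

theorem pow_add_one_mul_twoAdicProd_lt {q v a b : ℕ} (hq : 2 ≤ q) (ha : 2 ^ (v + 1) ∣ a)
    (ha0 : a ≠ 0) (hb : 2 ^ (v + 1) ∣ b) :
    (q ^ (2 ^ v + a) + 1) * twoAdicProd q b < q ^ (2 ^ v + a + b) + q ^ (a + b) := by
  set c := 2 ^ v + a
  set E := (submasks b).image (c + ·) ∪ submasks b
  have hdisj : Disjoint ((submasks b).image (c + ·)) (submasks b) := by
    refine disjoint_left.mpr fun e he he' ↦ ?_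
    obtain ⟨m, hm, rfl⟩ := mem_image.mp he
    have h : 2 ^ (v + 1) ∣ 2 ^ v := by
      have := two_pow_dvd_of_mem_submasks hb he'
      rwa [add_assoc, Nat.dvd_add_left (dvd_add ha (two_pow_dvd_of_mem_submasks hb hm))] at this
    exact absurd ((Nat.pow_dvd_pow_iff_le_right one_lt_two).mp h) (by omega)
  have hexpand : (q ^ c + 1) * twoAdicProd q b = ∑ e ∈ E, q ^ e := by
    rw [twoAdicProd_eq_sum_submasks, add_one_mul, mul_sum, sum_union hdisj,
      sum_image fun _ _ _ _ ↦ Nat.add_left_cancel]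
    simp only [pow_add]
  have hlow : ∀ e ∈ E.erase (c + b), e < a + b := by
    intro e he
    obtain ⟨hne, he⟩ := mem_erase.mp he
    rcases mem_union.mp he with he | he
    · obtain ⟨m, hm, rfl⟩ := mem_image.mp he
      have := add_two_pow_le_of_mem_submasks hb hm (by rintro rfl; exact hne rfl)
      rw [pow_succ] at this
      have := Nat.two_pow_pos v
      omega
    · have := le_of_mem_submasks he
      omega
  rw [hexpand, ← add_sum_erase E _ (mem_union_left _ (mem_image_of_mem _ (self_mem_submasks b)))]
  exact Nat.add_lt_add_left (Nat.geomSum_lt hq hlow) _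

theorem pow_add_one_mul_twoAdicProd_le {q v a b : ℕ} (hq : 2 ≤ q) (ha : 2 ^ (v + 1) ∣ a)
    (hb : 2 ^ (v + 1) ∣ b) :
    (q ^ (2 ^ v + a) + 1) * twoAdicProd q b ≤ twoAdicProd q (2 ^ v + a + b) := by
  rw [add_assoc, twoAdicProd_two_pow_add q (dvd_add ha hb)]
  rcases eq_or_ne a 0 with rfl | ha0
  · simp
  calc (q ^ (2 ^ v + a) + 1) * twoAdicProd q b
      ≤ q ^ (2 ^ v + (a + b)) + q ^ (a + b) := by
        simpa only [add_assoc] using (pow_add_one_mul_twoAdicProd_lt hq ha ha0 hb).le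
    _ ≤ (q ^ 2 ^ v + 1) * (q ^ (a + b) + 1) := by rw [pow_add, add_one_mul, mul_add_one]; omega
    _ ≤ (q ^ 2 ^ v + 1) * twoAdicProd q (a + b) :=
        Nat.mul_le_mul_left _ (pow_add_one_le_twoAdicProd q (by omega))

theorem prod_pow_add_one_le_twoAdicProd_sum {ι : Type*} {q : ℕ} (hq : 2 ≤ q) (s : Finset ι)
    {d : ι → ℕ} (hd : ∀ i ∈ s, d i ≠ 0)
    (hinj : Set.InjOn (fun i ↦ (d i).factorization 2) s) :
    ∏ i ∈ s, (q ^ d i + 1) ≤ twoAdicProd q (∑ i ∈ s, d i) := by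
  classical
  induction s using induction_on_min_value (fun i ↦ (d i).factorization 2) with
  | empty => simp [twoAdicProd]
  | insert a s has hmin ih =>
    set v := (d a).factorization 2
    have hda : d a ≠ 0 := hd a (mem_insert_self a s)
    have hs : 2 ^ (v + 1) ∣ ∑ i ∈ s, d i := dvd_sum fun i hi ↦ by
      have hne : v ≠ (d i).factorization 2 := fun h ↦
        has (hinj (mem_insert_self a s) (mem_insert_of_mem hi) h ▸ hi)
      exact (pow_dvd_pow 2 (lt_of_le_of_ne (hmin i hi) hne)).trans (Nat.ordProj_dvd _ _)
    have hsplit : 2 ^ v + (d a - 2 ^ v) = d a := Nat.add_sub_of_le (Nat.ordProj_le 2 hda)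
    rw [prod_insert has, sum_insert has, ← hsplit]
    exact (Nat.mul_le_mul_left _ (ih (fun i hi ↦ hd i (mem_insert_of_mem hi))
      (hinj.mono (coe_subset.mpr (subset_insert a s))))).trans
      (pow_add_one_mul_twoAdicProd_le hq (two_pow_succ_dvd_sub_ordProj hda) hs)

/-- Lemma 3.1: if d_1, …, d_ℓ are positive integers with pairwise distinct 2-parts and
2^(x_1) + … + 2^(x_t) is the 2-adic expansion of d_1 + … + d_ℓ, then
∏ (q^(d_i) + 1) ≤ ∏ (q^(2^(x_j)) + 1). -/
theorem prod_pow_add_one_le (f q : ℕ) (hf : 1 ≤ f) (hq : q = 2 ^ f)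
    (l t : ℕ) (d : Fin l → ℕ) (hd : ∀ i, 0 < d i)
    (hdist : ∀ i j, i ≠ j →
      2 ^ ((d i).factorization 2) ≠ 2 ^ ((d j).factorization 2))
    (x : Fin t → ℕ) (hx : Function.Injective x)
    (hsum : ∑ j, 2 ^ x j = ∑ i, d i) :
    ∏ i, (q ^ d i + 1) ≤ ∏ j, (q ^ 2 ^ x j + 1) := by
  have hq2 : 2 ≤ q := hq ▸ Nat.le_self_pow (by omega) 2
  have hinj : Set.InjOn (fun i ↦ (d i).factorization 2) (univ : Finset (Fin l)) :=
    fun i _ j _ h ↦ by_contra fun hij ↦ hdist i j hij (congrArg (2 ^ ·) h)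
  calc ∏ i, (q ^ d i + 1) ≤ twoAdicProd q (∑ i, d i) :=
        prod_pow_add_one_le_twoAdicProd_sum hq2 univ (fun i _ ↦ (hd i).ne') hinj
    _ = ∏ j, (q ^ 2 ^ x j + 1) := by
        rw [← hsum, ← sum_image hx.injOn, twoAdicProd_sum_two_pow, prod_image hx.injOn]
end

section
/- Let q > 2 be a power of 2, let m ≥ 4 be an even integer, and let ℓ be the largest positive integer with 2^ℓ + 2^{ℓ-1} ≤ m. Then lcm(q + 1, q^2 + 1, q^4 + 1, ..., q^{2^{ℓ-1}} + 1, q^{m - 2^ℓ + 1} - 1) = (q^{m - 2^ℓ + 1} - 1)·(q^{2^ℓ} - 1)/(q - 1), i.e. the lcm of the numbers q^{2^i}+1 for 0 ≤ i ≤ ℓ-1 together with q^{m-2^ℓ+1}-1 equals (q^{m-2^ℓ+1}-1)(q^{2^ℓ}-1)/(q-1). -/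
/-! For even `q` the generalized Fermat numbers `q ^ 2 ^ i + 1` are odd and pairwise coprime,
because `q ^ 2 ^ i + 1 ∣ q ^ 2 ^ j - 1` for `i < j` and `q ^ 2 ^ j ± 1` differ by `2`. They are
also coprime to `q ^ n - 1` for odd `n = m - 2 ^ ℓ + 1`: a common divisor divides
`gcd (q ^ 2 ^ (i + 1) - 1) (q ^ n - 1) = q - 1`, hence `q ^ 2 ^ i - 1`. So the lcm is the
product, which the telescoping identity `(q - 1) * ∏ i < ℓ, (q ^ 2 ^ i + 1) = q ^ 2 ^ ℓ - 1`
evaluates. -/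

namespace Nat

theorem coprime_add_one_sub_one_of_even {a : ℕ} (ha : Even a) : Coprime (a + 1) (a - 1) := by
  rcases a.eq_zero_or_pos with rfl | ha0
  · simp
  rw [show a - 1 = a + 1 - 2 by omega, coprime_self_sub_right (by omega), coprime_comm,
    coprime_two_left]
  exact ha.add_one

theorem pow_two_pow_add_one_dvd_pow_two_pow_sub_one (q : ℕ) {i j : ℕ} (hij : i < j) :
    q ^ 2 ^ i + 1 ∣ q ^ 2 ^ j - 1 := by
  have hsucc : q ^ 2 ^ i + 1 ∣ q ^ 2 ^ (i + 1) - 1 :=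
    ⟨q ^ 2 ^ i - 1, by rw [pow_succ, pow_mul, ← one_pow 2, Nat.sq_sub_sq, one_pow]⟩
  obtain ⟨c, hc⟩ := pow_dvd_pow 2 hij
  refine hsucc.trans ?_
  simpa only [hc, one_pow, pow_mul] using Nat.sub_dvd_pow_sub_pow (q ^ 2 ^ (i + 1)) 1 c

theorem mul_prod_range_pow_two_pow_add_one (q k : ℕ) :
    (q - 1) * ((List.range k).map fun i => q ^ 2 ^ i + 1).prod = q ^ 2 ^ k - 1 := by
  induction k with
  | zero => simp
  | succ k ih =>
    rw [List.prod_range_succ, ← mul_assoc, ih, pow_succ, pow_mul, ← one_pow 2, Nat.sq_sub_sq,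
      one_pow, mul_comm]

theorem foldr_lcm_eq_prod_mul {L : List ℕ} {b : ℕ} (hL : L.Pairwise Coprime)
    (hb : ∀ a ∈ L, Coprime a b) : L.foldr lcm b = L.prod * b := by
  induction L with
  | nil => simp
  | cons a L ih =>
    obtain ⟨haL, hL⟩ := List.pairwise_cons.1 hL
    have hfoldr := ih hL fun x hx => hb x (List.mem_cons_of_mem a hx)
    have hcop : Coprime a (L.prod * b) :=
      (coprime_list_prod_right_iff.2 haL).mul_right (hb a List.mem_cons_self)
    rw [List.foldr_cons, hfoldr, hcop.lcm_eq_mul, List.prod_cons, mul_assoc]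

variable {q : ℕ}

theorem coprime_pow_two_pow_add_one (hq : Even q) {i j : ℕ} (hij : i ≠ j) :
    Coprime (q ^ 2 ^ i + 1) (q ^ 2 ^ j + 1) := by
  wlog hlt : i < j generalizing i j
  · exact (this hij.symm (by omega)).symm
  have hodd := coprime_add_one_sub_one_of_even (hq.pow_of_ne_zero (n := 2 ^ j) (by positivity))
  exact hodd.symm.coprime_dvd_left (pow_two_pow_add_one_dvd_pow_two_pow_sub_one q hlt)

theorem coprime_pow_two_pow_add_one_pow_sub_one (hq : Even q) {n : ℕ} (hn : Odd n) (i : ℕ) :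
    Coprime (q ^ 2 ^ i + 1) (q ^ n - 1) := by
  set g := gcd (q ^ 2 ^ i + 1) (q ^ n - 1)
  have hg_dvd : g ∣ q - 1 := by
    have h : g ∣ gcd (q ^ 2 ^ (i + 1) - 1) (q ^ n - 1) := Nat.dvd_gcd ((gcd_dvd_left _ _).trans
      (pow_two_pow_add_one_dvd_pow_two_pow_sub_one q (Nat.lt_succ_self i))) (gcd_dvd_right _ _)
    rwa [pow_sub_one_gcd_pow_sub_one, (coprime_two_left.2 hn).pow_left (i + 1), pow_one] at h
  have hodd := coprime_add_one_sub_one_of_even (hq.pow_of_ne_zero (n := 2 ^ i) (by positivity))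
  exact eq_one_of_dvd_coprimes hodd (gcd_dvd_left _ _)
    (hg_dvd.trans (by simpa using Nat.sub_dvd_pow_sub_pow q 1 (2 ^ i)))

end Nat

theorem lcm_torus_orders_general (f q m l : ℕ) (hf : 1 ≤ f) (hq : q = 2 ^ f)
    (hme : Even m)
    (hl : 0 < l) (hlm : 2 ^ l + 2 ^ (l - 1) ≤ m) :
    ((List.range l).map fun i => q ^ 2 ^ i + 1).foldr Nat.lcm (q ^ (m - 2 ^ l + 1) - 1) =
      (q ^ (m - 2 ^ l + 1) - 1) * (q ^ 2 ^ l - 1) / (q - 1) := by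
  have hq_even : Even q := hq ▸ Nat.even_pow.2 ⟨even_two, by omega⟩
  have hq_pos : 0 < q - 1 := by
    have := Nat.one_lt_two_pow (n := f) (by omega)
    omega
  have hn : Odd (m - 2 ^ l + 1) := by
    have h2l : Even (2 ^ l) := Nat.even_pow.2 ⟨even_two, by omega⟩
    exact ((Nat.even_sub ((Nat.le_add_right _ _).trans hlm)).2 (iff_of_true hme h2l)).add_one
  have hpairwise : ((List.range l).map fun i => q ^ 2 ^ i + 1).Pairwise Nat.Coprime :=
    List.pairwise_map.2 <| List.nodup_range.imp (Nat.coprime_pow_two_pow_add_one hq_even)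
  rw [Nat.foldr_lcm_eq_prod_mul hpairwise (by
      simp only [List.mem_map, List.mem_range]
      rintro _ ⟨i, -, rfl⟩
      exact Nat.coprime_pow_two_pow_add_one_pow_sub_one hq_even hn i),
    ← Nat.mul_prod_range_pow_two_pow_add_one, mul_left_comm, Nat.mul_div_cancel_left _ hq_pos,
    mul_comm]

/-- For q > 2 a power of 2, m ≥ 4 even and ℓ the largest positive integer with
2^ℓ + 2^(ℓ-1) ≤ m, the lcm of q+1, q^2+1, …, q^(2^(ℓ-1))+1 and q^(m-2^ℓ+1)-1 equals
(q^(m-2^ℓ+1) - 1)(q^(2^ℓ) - 1)/(q - 1). -/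
theorem lcm_torus_orders (f q m l : ℕ) (hf : 1 ≤ f) (hq : q = 2 ^ f) (hq2 : 2 < q)
    (hm : 4 ≤ m) (hme : Even m)
    (hl : 0 < l) (hlm : 2 ^ l + 2 ^ (l - 1) ≤ m)
    (hlmax : ∀ k, 0 < k → 2 ^ k + 2 ^ (k - 1) ≤ m → k ≤ l) :
    ((List.range l).map fun i => q ^ 2 ^ i + 1).foldr Nat.lcm (q ^ (m - 2 ^ l + 1) - 1) =
      (q ^ (m - 2 ^ l + 1) - 1) * (q ^ 2 ^ l - 1) / (q - 1) :=
  lcm_torus_orders_general f q m l hf hq hme hl hlm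
end

section
/- Let q be a power of 2, let a ≥ 1 be an integer and let b ≥ 1 be an odd integer. Then q^a + 1 divides q^{ab} + 1, and if (q, a, b) ≠ (2, 1, 3) then (q^{ab} + 1)/(q^a + 1) ≥ 2^{⌈log₂ b⌉}. -/
/-! Put `x = q ^ a = 2 ^ m` with `m ≥ 1` and `k = (x ^ b + 1) / (x + 1)`. Since `x + 1 ≤ 2x`, we get
`2xk ≥ x ^ b + 1 > x ^ b`, i.e. `x ^ (b - 1) < 2k`, so `2 ^ c < k` for `c = ⌈log₂ b⌉` as soon as
`c + 1 ≤ m (b - 1)`. For odd `b ≥ 5` this follows from `⌈log₂ b⌉ ≤ b - 2`, and for `b = 3` it holds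
exactly when `m ≥ 2`; the case `b = 1` is trivial. -/

theorem Nat.le_two_pow_sub_two {b : ℕ} (hb : 4 ≤ b) : b ≤ 2 ^ (b - 2) := by
  induction b, hb using Nat.le_induction with
  | base => norm_num
  | succ n hn ih =>
    rw [show n + 1 - 2 = n - 2 + 1 by omega, pow_succ]
    omega

theorem Nat.clog_two_add_one_le_mul_pred {m b : ℕ} (hm : 1 ≤ m) (hb : Odd b) (hb1 : b ≠ 1)
    (hne : ¬(m = 1 ∧ b = 3)) : Nat.clog 2 b + 1 ≤ m * (b - 1) := by
  obtain ⟨j, rfl⟩ := hb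
  rcases Nat.lt_or_ge j 2 with hj | hj
  · obtain rfl : j = 1 := by omega
    have hclog : Nat.clog 2 (2 * 1 + 1) = 2 := by decide
    have hm2 : 2 ≤ m := by omega
    rw [hclog]
    omega
  · have hclog : Nat.clog 2 (2 * j + 1) ≤ 2 * j + 1 - 2 :=
      (Nat.clog_le_iff_le_pow one_lt_two).mpr (Nat.le_two_pow_sub_two (by omega))
    calc Nat.clog 2 (2 * j + 1) + 1 ≤ 2 * j + 1 - 1 := by omega
      _ ≤ m * (2 * j + 1 - 1) := Nat.le_mul_of_pos_left _ hm

theorem Nat.pow_pred_lt_two_mul_div {x b : ℕ} (hx : 1 ≤ x) (hb : 1 ≤ b) (hdvd : x + 1 ∣ x ^ b + 1) :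
    x ^ (b - 1) < 2 * ((x ^ b + 1) / (x + 1)) := by
  obtain ⟨k, hk⟩ := hdvd
  rw [hk, Nat.mul_div_cancel_left _ (Nat.succ_pos x)]
  have hxb : x ^ b = x ^ (b - 1) * x := by rw [← pow_succ, Nat.sub_add_cancel hb]
  have : x ^ (b - 1) * x < 2 * k * x := by nlinarith
  exact Nat.lt_of_mul_lt_mul_right this

theorem pow_add_one_dvd_and_quot_ge_odd_general (f q a b : ℕ) (hf : 1 ≤ f) (hq : q = 2 ^ f)
    (ha : 1 ≤ a) (hbodd : Odd b) :
    q ^ a + 1 ∣ q ^ (a * b) + 1 ∧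
      (¬(q = 2 ∧ a = 1 ∧ b = 3) →
        2 ^ Nat.clog 2 b ≤ (q ^ (a * b) + 1) / (q ^ a + 1)) := by
  have hx : q ^ a = 2 ^ (f * a) := by rw [hq, ← pow_mul]
  have hm : 1 ≤ f * a := Nat.one_le_iff_ne_zero.mpr (by positivity)
  rw [pow_mul]
  set x := q ^ a
  have hdvd : x + 1 ∣ x ^ b + 1 := by simpa using hbodd.nat_add_dvd_pow_add_pow x 1
  refine ⟨hdvd, fun hne => ?_⟩
  by_cases hb1 : b = 1
  · subst hb1
    simp [Nat.div_self]
  have hne' : ¬(f * a = 1 ∧ b = 3) := by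
    rintro ⟨hfa, hb3⟩
    obtain ⟨rfl, rfl⟩ := mul_eq_one.mp hfa
    exact hne ⟨hq, rfl, hb3⟩
  have hexp := Nat.clog_two_add_one_le_mul_pred hm hbodd hb1 hne'
  have hlt := Nat.pow_pred_lt_two_mul_div (hx ▸ Nat.one_le_two_pow) hbodd.pos hdvd
  have hpow : 2 ^ (Nat.clog 2 b + 1) ≤ x ^ (b - 1) := by
    rw [hx, ← pow_mul]
    exact Nat.pow_le_pow_right two_pos hexp
  rw [pow_succ] at hpow
  omega

/-- Lemma 2.4(ii) of [DGPS]: for b odd, q^a + 1 divides q^(ab) + 1, and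
(q^(ab) + 1)/(q^a + 1) ≥ 2^⌈log₂ b⌉ unless (q, a, b) = (2, 1, 3). -/
theorem pow_add_one_dvd_and_quot_ge_odd (f q a b : ℕ) (hf : 1 ≤ f) (hq : q = 2 ^ f)
    (ha : 1 ≤ a) (hb : 1 ≤ b) (hbodd : Odd b) :
    q ^ a + 1 ∣ q ^ (a * b) + 1 ∧
      (¬(q = 2 ∧ a = 1 ∧ b = 3) →
        2 ^ Nat.clog 2 b ≤ (q ^ (a * b) + 1) / (q ^ a + 1)) :=
  pow_add_one_dvd_and_quot_ge_odd_general f q a b hf hq ha hbodd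
end

section
/- Let q be a power of 2, let a ≥ 1 be an integer and let b ≥ 1 be an even integer. Then q^a + 1 divides q^{ab} - 1, and if (q, a, b) ≠ (2, 1, 2) then (q^{ab} - 1)/(q^a + 1) ≥ 2^{⌈log₂ b⌉}. -/
/-!
Put `x = q ^ a ≥ 2`. Since `b` is even, `x + 1 ∣ x ^ 2 - 1 ∣ x ^ b - 1`, and
`(x + 1) (x - 1) x ^ (b - 2) = x ^ b - x ^ (b - 2) ≤ x ^ b - 1` bounds the quotient below by
`(x - 1) x ^ (b - 2)`. For `x ≥ 3` this is at least `2 ^ (b - 1) ≥ 2 ^ ⌈log₂ b⌉`. The only way to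
have `x = 2` is `q = 2, a = 1`; then `b ≥ 4` and `2 ^ (b - 2) ≥ 2 ^ ⌈log₂ b⌉` suffices.
-/

namespace Nat

theorem add_one_dvd_pow_sub_one_of_even (x : ℕ) {b : ℕ} (hb : Even b) : x + 1 ∣ x ^ b - 1 := by
  have hsq : x + 1 ∣ x ^ 2 - 1 := ⟨x - 1, by rw [← Nat.sq_sub_sq, one_pow]⟩
  exact hsq.trans (Nat.pow_sub_one_dvd_pow_sub_one x (even_iff_two_dvd.mp hb))

theorem sub_one_mul_pow_sub_two_le_div (x : ℕ) {b : ℕ} (hb : 2 ≤ b) :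
    (x - 1) * x ^ (b - 2) ≤ (x ^ b - 1) / (x + 1) := by
  obtain ⟨n, rfl⟩ : ∃ n, b = n + 2 := ⟨b - 2, by omega⟩
  rw [Nat.add_sub_cancel, Nat.le_div_iff_mul_le (Nat.add_one_pos x)]
  rcases x.eq_zero_or_pos with rfl | hx
  · simp
  have hprod : (x - 1) * x ^ n * (x + 1) = x ^ (n + 2) - x ^ n := by
    rw [mul_right_comm, mul_comm (x - 1), ← Nat.sq_sub_sq, one_pow, Nat.sub_one_mul, ← pow_add, add_comm n 2]
  have hpos : 1 ≤ x ^ n := Nat.one_le_pow n x hx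
  omega

theorem clog_two_le_sub_one (b : ℕ) : clog 2 b ≤ b - 1 := by
  rw [clog_le_iff_le_pow one_lt_two]
  have : b - 1 < 2 ^ (b - 1) := Nat.lt_two_pow_self
  omega

theorem clog_two_le_sub_two {b : ℕ} (hb : 4 ≤ b) : clog 2 b ≤ b - 2 := by
  rw [clog_le_iff_le_pow one_lt_two]
  induction b, hb using Nat.le_induction with
  | base => norm_num
  | succ n hn ih =>
    rw [show n + 1 - 2 = n - 2 + 1 by omega, pow_succ]
    omega

end Nat

/-- Lemma 2.4(iii) of [DGPS]: for b even, q^a + 1 divides q^(ab) - 1, and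
(q^(ab) - 1)/(q^a + 1) ≥ 2^⌈log₂ b⌉ unless (q, a, b) = (2, 1, 2). -/
theorem pow_add_one_dvd_and_quot_ge_even (f q a b : ℕ) (hf : 1 ≤ f) (hq : q = 2 ^ f)
    (ha : 1 ≤ a) (hb : 1 ≤ b) (hbeven : Even b) :
    q ^ a + 1 ∣ q ^ (a * b) - 1 ∧
      (¬(q = 2 ∧ a = 1 ∧ b = 2) →
        2 ^ Nat.clog 2 b ≤ (q ^ (a * b) - 1) / (q ^ a + 1)) := by
  rw [pow_mul]
  refine ⟨Nat.add_one_dvd_pow_sub_one_of_even _ hbeven, fun hexc => ?_⟩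
  have hb2 : 2 ≤ b := by obtain ⟨k, rfl⟩ := hbeven; omega
  have hq2 : 2 ≤ q := hq ▸ Nat.le_self_pow (by omega) 2
  have hx2 : 2 ≤ q ^ a := hq2.trans (Nat.le_self_pow (by omega) q)
  refine le_trans ?_ (Nat.sub_one_mul_pow_sub_two_le_div _ hb2)
  rcases hx2.eq_or_lt with hx | hx
  · obtain ⟨rfl, rfl⟩ := (Nat.prime_two.pow_eq_iff).mp hx.symm
    have hb4 : 4 ≤ b := by obtain ⟨k, rfl⟩ := hbeven; omega
    rw [pow_one]
    simpa using Nat.pow_le_pow_right two_pos (Nat.clog_two_le_sub_two hb4)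
  · calc 2 ^ Nat.clog 2 b ≤ 2 ^ (b - 1) := Nat.pow_le_pow_right two_pos (Nat.clog_two_le_sub_one b)
      _ = 2 * 2 ^ (b - 2) := by rw [← pow_succ']; congr 1; omega
      _ ≤ (q ^ a - 1) * (q ^ a) ^ (b - 2) :=
        Nat.mul_le_mul (by omega) (Nat.pow_le_pow_left hx2 _)
end

section
/- Let m ≥ 1 be an integer and let q be a power of 2, and let M = max{ L_{m,q}(m', ℘) : m' ∈ {0, ..., m} and ℘ a signed partition of m - m' }. Then there exist m' ∈ {0, ..., m} and a signed partition ℘ = (d_1^{ε_1}, ..., d_ℓ^{ε_ℓ}) of m - m' whose parts d_i^{ε_i} are pairwise distinct (i.e. for i ≠ j one has (d_i, ε_i) ≠ (d_j, ε_j)) such that L_{m,q}(m', ℘) = M. -/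
/-! Deduplicating the parts of a signed partition does not change the lcm of the values
`q^d - ε`, and only lowers the sum of the parts; the freed weight is moved into `m'`, which
can only increase the factor `2^⌈log₂(2m')⌉`. So a maximiser with repeated parts yields one
with distinct parts and at least the same value. -/

/-- A signed partition of `n`: a list of parts `(d, ε)` with `d > 0`, where `ε = true`
encodes sign `+1` and `ε = false` encodes sign `-1`, the `d`'s summing to `n`. -/
def IsSignedPartition (n : ℕ) (P : List (ℕ × Bool)) : Prop :=
  (∀ p ∈ P, 0 < p.1) ∧ (P.map Prod.fst).sum = n

/-- The value `q^d - ε` associated to a signed part `(d, ε)`. -/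
def partVal (q : ℕ) (p : ℕ × Bool) : ℕ :=
  if p.2 then q ^ p.1 - 1 else q ^ p.1 + 1

/-- `L_{m,q}(m', ℘) = 2^⌈log₂(2m')⌉ · lcm(q^{d₁} - ε₁, …, q^{d_ℓ} - ε_ℓ)`, with the
conventions that the power of two is `1` when `m' = 0` and the empty lcm is `1`. -/
def Lfun (q mp : ℕ) (P : List (ℕ × Bool)) : ℕ :=
  2 ^ Nat.clog 2 (2 * mp) * (P.map (partVal q)).foldr Nat.lcm 1

theorem List.foldr_lcm_eq_multiset_lcm (l : List ℕ) :
    l.foldr Nat.lcm 1 = (l : Multiset ℕ).lcm := by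
  induction l with
  | nil => rfl
  | cons a l ih => rw [List.foldr_cons, ih, ← Multiset.cons_coe, Multiset.lcm_cons]; rfl

theorem List.foldr_lcm_map_dedup {α : Type*} [DecidableEq α] (g : α → ℕ) (l : List α) :
    (l.dedup.map g).foldr Nat.lcm 1 = (l.map g).foldr Nat.lcm 1 := by
  simp only [List.foldr_lcm_eq_multiset_lcm, ← Multiset.map_coe, ← Multiset.coe_dedup]
  rw [← Multiset.lcm_dedup, Multiset.dedup_map_dedup_eq, Multiset.lcm_dedup]

theorem Lfun_dedup (q mp : ℕ) (P : List (ℕ × Bool)) : Lfun q mp P.dedup = Lfun q mp P := by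
  rw [Lfun, Lfun, List.foldr_lcm_map_dedup]

theorem Lfun_mono_left (q : ℕ) (P : List (ℕ × Bool)) : Monotone fun mp => Lfun q mp P :=
  fun _ _ h => Nat.mul_le_mul_right _ <|
    Nat.pow_le_pow_right two_pos <| Nat.clog_mono_right 2 <| Nat.mul_le_mul_left 2 h

theorem IsSignedPartition.dedup {n : ℕ} {P : List (ℕ × Bool)} (hP : IsSignedPartition n P) :
    ∃ k ≤ n, IsSignedPartition k P.dedup :=
  ⟨_, hP.2 ▸ ((P.dedup_sublist.map Prod.fst).sum_le_sum fun _ _ => Nat.zero_le _),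
    fun p hp => hP.1 p (List.mem_dedup.mp hp), rfl⟩

theorem max_Lfun_attained_with_distinct_parts_general (q m M : ℕ)
    (hM : IsGreatest {L : ℕ | ∃ mp ≤ m, ∃ P : List (ℕ × Bool),
      IsSignedPartition (m - mp) P ∧ Lfun q mp P = L} M) :
    ∃ mp ≤ m, ∃ P : List (ℕ × Bool), IsSignedPartition (m - mp) P ∧ P.Nodup ∧
      Lfun q mp P = M := by
  obtain ⟨⟨mp, hmp, P, hP, rfl⟩, hmax⟩ := hM
  obtain ⟨k, hk, hQ⟩ := hP.dedup
  have hQ' : IsSignedPartition (m - (m - k)) P.dedup := by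
    rwa [Nat.sub_sub_self (hk.trans (Nat.sub_le m mp))]
  refine ⟨m - k, Nat.sub_le m k, P.dedup, hQ', P.nodup_dedup,
    le_antisymm (hmax ⟨m - k, Nat.sub_le m k, P.dedup, hQ', rfl⟩) ?_⟩
  calc Lfun q mp P = Lfun q mp P.dedup := (Lfun_dedup q mp P).symm
    _ ≤ Lfun q (m - k) P.dedup := Lfun_mono_left q P.dedup (by omega)

/-- Claim 1 in the proof of Theorem 2.2: the maximum M of L_m,q(m', ℘) is attained
at some m' and some signed partition ℘ of m - m' with pairwise distinct parts. -/
theorem max_Lfun_attained_with_distinct_parts (f q m M : ℕ) (hf : 1 ≤ f) (hq : q = 2 ^ f)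
    (hm : 1 ≤ m)
    (hM : IsGreatest {L : ℕ | ∃ mp ≤ m, ∃ P : List (ℕ × Bool),
      IsSignedPartition (m - mp) P ∧ Lfun q mp P = L} M) :
    ∃ mp ≤ m, ∃ P : List (ℕ × Bool), IsSignedPartition (m - mp) P ∧ P.Nodup ∧
      Lfun q mp P = M :=
  max_Lfun_attained_with_distinct_parts_general q m M hM
end

section
/- Let m ≥ 1 be an integer and let q be a power of 2, and let M = max{ L_{m,q}(m', ℘) : m' ∈ {0, ..., m} and ℘ a signed partition of m - m' }. If m' ∈ {0, ..., m} and ℘ is a signed partition of m - m' with L_{m,q}(m', ℘) = M, then m' = 0 when q > 2, and m' ≤ 3 when q = 2. -/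
/-! A single part `m^{-1}` with `m' = 0` shows `M ≥ q^m + 1`. Conversely, for a signed partition
`℘` of `n`, `(q - 1) · lcm(℘) < q^(n+1)`: all values `q^d + 1` whose `d` have the same 2-adic
valuation `t` share the factor `q^(2^t) + 1`, so with `S` the set of these valuations and
`N = ∑_{t ∈ S} 2^t` one gets `lcm(℘) · q^N ≤ q^n · ∏_{t ∈ S} (q^(2^t) + 1)`, and the product
expands into distinct powers of `q` of exponent at most `N`. Hence `L_{m,q}(m', ℘) < q^m` as soon
as `2^⌈log₂ 2m'⌉ ≤ (q - 1) q^(m'-1)`, which holds for `m' ≥ 1` when `q ≥ 3` and for `m' ≥ 4`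
when `q = 2`. -/

open Finset

namespace Nat

lemma lcm_mul_le_mul_of_dvd {a b g : ℕ} (hga : g ∣ a) (hgb : g ∣ b) :
    Nat.lcm a b * g ≤ a * b := by
  rcases Nat.eq_zero_or_pos b with rfl | hb
  · simp
  rw [← Nat.gcd_mul_lcm a b, mul_comm (a.gcd b)]
  exact Nat.mul_le_mul_left _ (Nat.le_of_dvd (Nat.gcd_pos_of_pos_right _ hb) (Nat.dvd_gcd hga hgb))

lemma pow_two_pow_factorization_add_one_dvd (q : ℕ) {d : ℕ} (hd : d ≠ 0) :
    q ^ 2 ^ d.factorization 2 + 1 ∣ q ^ d + 1 := by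
  have hodd : Odd (ordCompl[2] d) := Nat.coprime_two_left.1 (Nat.coprime_ordCompl Nat.prime_two hd)
  have h := hodd.nat_add_dvd_pow_add_pow (q ^ 2 ^ d.factorization 2) 1
  rwa [one_pow, ← pow_mul, Nat.ordProj_mul_ordCompl_eq_self] at h

lemma two_mul_le_two_pow_pred {k : ℕ} (hk : 4 ≤ k) : 2 * k ≤ 2 ^ (k - 1) := by
  induction k, hk using Nat.le_induction with
  | base => norm_num
  | succ k hk ih =>
    rw [show k + 1 - 1 = k - 1 + 1 by omega, pow_succ]
    have : 2 ≤ 2 ^ (k - 1) := Nat.le_self_pow (by omega) 2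
    omega

end Nat

def partLcm (q : ℕ) (P : List (ℕ × Bool)) : ℕ :=
  (P.map (partVal q)).foldr Nat.lcm 1

@[simp] lemma partLcm_nil (q : ℕ) : partLcm q [] = 1 := rfl

@[simp] lemma partLcm_cons (q : ℕ) (p : ℕ × Bool) (P : List (ℕ × Bool)) :
    partLcm q (p :: P) = Nat.lcm (partVal q p) (partLcm q P) := rfl

lemma Lfun_eq (q mp : ℕ) (P : List (ℕ × Bool)) :
    Lfun q mp P = 2 ^ Nat.clog 2 (2 * mp) * partLcm q P := rfl

lemma partVal_dvd_partLcm (q : ℕ) {p : ℕ × Bool} {P : List (ℕ × Bool)} (hp : p ∈ P) :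
    partVal q p ∣ partLcm q P :=
  Multiset.dvd_lcm (Multiset.mem_coe.2 (List.mem_map_of_mem hp))

/-- The set of 2-adic valuations of the parts `d^{-1}` of `P`. -/
def minusLevels (P : List (ℕ × Bool)) : Finset ℕ :=
  ((P.filter (fun p => !p.2)).map (fun p => p.1.factorization 2)).toFinset

lemma mem_minusLevels {P : List (ℕ × Bool)} {t : ℕ} :
    t ∈ minusLevels P ↔ ∃ d, (d, false) ∈ P ∧ d.factorization 2 = t := by
  simp [minusLevels]

lemma pow_two_pow_add_one_dvd_partLcm (q : ℕ) {P : List (ℕ × Bool)} (hP : ∀ p ∈ P, 0 < p.1)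
    {t : ℕ} (ht : t ∈ minusLevels P) : q ^ 2 ^ t + 1 ∣ partLcm q P := by
  obtain ⟨d, hdP, rfl⟩ := mem_minusLevels.1 ht
  exact (Nat.pow_two_pow_factorization_add_one_dvd q (hP _ hdP).ne').trans
    (partVal_dvd_partLcm q hdP)

lemma lcm_pow_add_one_partLcm_le {q d : ℕ} (hq : 0 < q) (hd : 0 < d) {P : List (ℕ × Bool)}
    (hP : ∀ p ∈ P, 0 < p.1) (ht : d.factorization 2 ∈ minusLevels P) :
    Nat.lcm (q ^ d + 1) (partLcm q P) ≤ q ^ d * partLcm q P := by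
  set g := q ^ 2 ^ d.factorization 2 + 1
  have hshared : Nat.lcm (q ^ d + 1) (partLcm q P) * g ≤ (q ^ d + 1) * partLcm q P :=
    Nat.lcm_mul_le_mul_of_dvd (Nat.pow_two_pow_factorization_add_one_dvd q hd.ne')
      (pow_two_pow_add_one_dvd_partLcm q hP ht)
  have hg : 2 ≤ g := Nat.succ_le_succ (Nat.one_le_pow _ q hq)
  have hgrow : q ^ d + 1 ≤ q ^ d * g := by nlinarith [Nat.one_le_pow d q hq]
  refine Nat.le_of_mul_le_mul_right ?_ (show 0 < g by positivity)
  calc Nat.lcm (q ^ d + 1) (partLcm q P) * g ≤ (q ^ d + 1) * partLcm q P := hshared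
    _ ≤ q ^ d * g * partLcm q P := Nat.mul_le_mul_right _ hgrow
    _ = q ^ d * partLcm q P * g := by ring

theorem partLcm_mul_le {q : ℕ} (hq : 0 < q) (P : List (ℕ × Bool)) (hP : ∀ p ∈ P, 0 < p.1) :
    partLcm q P * q ^ (∑ t ∈ minusLevels P, 2 ^ t) ≤
      q ^ (P.map Prod.fst).sum * ∏ t ∈ minusLevels P, (q ^ 2 ^ t + 1) := by
  induction P with
  | nil => simp [minusLevels]
  | cons p P ih =>
    obtain ⟨d, ε⟩ := p
    have hd : 0 < d := hP _ List.mem_cons_self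
    have hP' : ∀ p ∈ P, 0 < p.1 := fun p hp => hP p (List.mem_cons_of_mem _ hp)
    specialize ih hP'
    set S := minusLevels P
    set L := partLcm q P
    have hsum : (((d, ε) :: P).map Prod.fst).sum = d + (P.map Prod.fst).sum := by simp
    have of_le (hS : minusLevels ((d, ε) :: P) = S)
        (hle : Nat.lcm (partVal q (d, ε)) L ≤ q ^ d * L) :
        partLcm q ((d, ε) :: P) * q ^ (∑ t ∈ minusLevels ((d, ε) :: P), 2 ^ t) ≤
          q ^ (((d, ε) :: P).map Prod.fst).sum *
            ∏ t ∈ minusLevels ((d, ε) :: P), (q ^ 2 ^ t + 1) := by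
      rw [hS, partLcm_cons, hsum, pow_add]
      calc Nat.lcm (partVal q (d, ε)) L * q ^ (∑ t ∈ S, 2 ^ t)
          ≤ q ^ d * (L * q ^ (∑ t ∈ S, 2 ^ t)) := by
            rw [← mul_assoc]; exact Nat.mul_le_mul_right _ hle
        _ ≤ q ^ d * (q ^ (P.map Prod.fst).sum * ∏ t ∈ S, (q ^ 2 ^ t + 1)) :=
            Nat.mul_le_mul_left _ ih
        _ = _ := by ring
    cases ε with
    | true =>
      refine of_le (by simp [minusLevels, S]) ?_
      calc Nat.lcm (partVal q (d, true)) L ≤ (q ^ d - 1) * L := by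
            simpa [partVal] using Nat.lcm_mul_le_mul_of_dvd (one_dvd (q ^ d - 1)) (one_dvd L)
        _ ≤ q ^ d * L := Nat.mul_le_mul_right _ (Nat.sub_le _ _)
    | false =>
      set t := d.factorization 2
      have hins : minusLevels ((d, false) :: P) = insert t S := by simp [minusLevels, S, t]
      have hval : partVal q (d, false) = q ^ d + 1 := rfl
      by_cases ht : t ∈ S
      · exact of_le (by rw [hins, insert_eq_of_mem ht]) (lcm_pow_add_one_partLcm_le hq hd hP' ht)
      · rw [hins, sum_insert ht, prod_insert ht, partLcm_cons, hsum, hval]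
        have hlcm : Nat.lcm (q ^ d + 1) L ≤ (q ^ d + 1) * L := by
          simpa using Nat.lcm_mul_le_mul_of_dvd (one_dvd (q ^ d + 1)) (one_dvd L)
        have hpow : q ^ 2 ^ t ≤ q ^ d := Nat.pow_le_pow_right hq (Nat.ordProj_le 2 hd.ne')
        have hgrow : (q ^ d + 1) * q ^ 2 ^ t ≤ q ^ d * (q ^ 2 ^ t + 1) := by nlinarith
        calc Nat.lcm (q ^ d + 1) L * q ^ (2 ^ t + ∑ t ∈ S, 2 ^ t)
            ≤ (q ^ d + 1) * L * (q ^ 2 ^ t * q ^ (∑ t ∈ S, 2 ^ t)) := by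
              rw [pow_add]; exact Nat.mul_le_mul_right _ hlcm
          _ = (q ^ d + 1) * q ^ 2 ^ t * (L * q ^ (∑ t ∈ S, 2 ^ t)) := by ring
          _ ≤ q ^ d * (q ^ 2 ^ t + 1) * (q ^ (P.map Prod.fst).sum * ∏ t ∈ S, (q ^ 2 ^ t + 1)) :=
              Nat.mul_le_mul hgrow ih
          _ = _ := by ring

lemma sub_one_mul_prod_pow_two_pow_add_one_lt {q : ℕ} (hq : 0 < q) (S : Finset ℕ) :
    (q - 1) * ∏ t ∈ S, (q ^ 2 ^ t + 1) < q ^ (∑ t ∈ S, 2 ^ t + 1) := by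
  induction S using Finset.induction_on_max with
  | empty =>
    simp only [prod_empty, sum_empty, mul_one, zero_add, pow_one]
    omega
  | insert a S hlt ih =>
    have haS : a ∉ S := fun h => (hlt a h).false
    rw [prod_insert haS, sum_insert haS, add_assoc, pow_add]
    have hle : q ^ (∑ t ∈ S, 2 ^ t + 1) ≤ q ^ 2 ^ a :=
      Nat.pow_le_pow_right hq (Nat.geomSum_lt le_rfl hlt)
    set X := (q - 1) * ∏ t ∈ S, (q ^ 2 ^ t + 1)
    set Y := q ^ (∑ t ∈ S, 2 ^ t + 1)
    set Z := q ^ 2 ^ a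
    calc (q - 1) * ((Z + 1) * ∏ t ∈ S, (q ^ 2 ^ t + 1)) = (Z + 1) * X := by ring
      _ < Z * Y := by nlinarith

theorem partLcm_mul_sub_one_lt {q : ℕ} (hq : 0 < q) {P : List (ℕ × Bool)}
    (hP : ∀ p ∈ P, 0 < p.1) : partLcm q P * (q - 1) < q ^ ((P.map Prod.fst).sum + 1) := by
  set S := minusLevels P
  set n := (P.map Prod.fst).sum
  set N := ∑ t ∈ S, 2 ^ t
  have hlcm := partLcm_mul_le hq P hP
  have hprod := sub_one_mul_prod_pow_two_pow_add_one_lt hq S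
  refine Nat.lt_of_mul_lt_mul_right (a := q ^ N) ?_
  calc partLcm q P * (q - 1) * q ^ N = partLcm q P * q ^ N * (q - 1) := by ring
    _ ≤ (q ^ n * ∏ t ∈ S, (q ^ 2 ^ t + 1)) * (q - 1) := Nat.mul_le_mul_right _ hlcm
    _ = q ^ n * ((q - 1) * ∏ t ∈ S, (q ^ 2 ^ t + 1)) := by ring
    _ < q ^ n * q ^ (N + 1) := Nat.mul_lt_mul_of_pos_left hprod (by positivity)
    _ = q ^ (n + 1) * q ^ N := by ring

theorem Lfun_lt_pow {q m mp : ℕ} {P : List (ℕ × Bool)} (hmp0 : 0 < mp) (hmp : mp ≤ m)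
    (hP : IsSignedPartition (m - mp) P)
    (hD : 2 ^ Nat.clog 2 (2 * mp) ≤ (q - 1) * q ^ (mp - 1)) : Lfun q mp P < q ^ m := by
  set D := 2 ^ Nat.clog 2 (2 * mp)
  have hq : 0 < q := by
    rcases Nat.eq_zero_or_pos q with rfl | hq
    · simp [D] at hD
    · exact hq
  have hlcm := partLcm_mul_sub_one_lt hq hP.1
  rw [hP.2] at hlcm
  refine Nat.lt_of_mul_lt_mul_left (a := q - 1) ?_
  calc (q - 1) * Lfun q mp P = D * (partLcm q P * (q - 1)) := by rw [Lfun_eq]; ring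
    _ < D * q ^ (m - mp + 1) := Nat.mul_lt_mul_of_pos_left hlcm (by positivity)
    _ ≤ (q - 1) * q ^ (mp - 1) * q ^ (m - mp + 1) := Nat.mul_le_mul_right _ hD
    _ = (q - 1) * q ^ m := by rw [mul_assoc, ← pow_add]; congr 2; omega

lemma two_pow_clog_two_mul_le_of_three_le {q k : ℕ} (hq : 3 ≤ q) (hk : 0 < k) :
    2 ^ Nat.clog 2 (2 * k) ≤ (q - 1) * q ^ (k - 1) := by
  have hk2 : 2 * k ≤ 2 ^ k := by
    have := (k - 1).lt_two_pow_self
    rw [show k = k - 1 + 1 by omega, pow_succ]; omega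
  calc 2 ^ Nat.clog 2 (2 * k) ≤ 2 ^ k := Nat.pow_le_pow_right two_pos (Nat.clog_le_of_le_pow hk2)
    _ = 2 * 2 ^ (k - 1) := by rw [← pow_succ']; congr 1; omega
    _ ≤ (q - 1) * q ^ (k - 1) := Nat.mul_le_mul (by omega) (Nat.pow_le_pow_left (by omega) _)

theorem max_Lfun_small_mp_general (q m M : ℕ)
    (hM : IsGreatest {L : ℕ | ∃ mp ≤ m, ∃ P : List (ℕ × Bool),
      IsSignedPartition (m - mp) P ∧ Lfun q mp P = L} M)
    (mp : ℕ) (hmp : mp ≤ m) (P : List (ℕ × Bool)) (hP : IsSignedPartition (m - mp) P)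
    (hL : Lfun q mp P = M) :
    (2 < q → mp = 0) ∧ (q = 2 → mp ≤ 3) := by
  have hbig : 0 < mp → ¬ 2 ^ Nat.clog 2 (2 * mp) ≤ (q - 1) * q ^ (mp - 1) := by
    intro hmp0 hD
    have hsingle : IsSignedPartition (m - 0) [(m, false)] :=
      ⟨by simpa using hmp0.trans_le hmp, by simp⟩
    have hM_ge : q ^ m + 1 ≤ M := hM.2 ⟨0, m.zero_le, _, hsingle, by simp [Lfun, partVal]⟩
    have hlt : M < q ^ m := hL ▸ Lfun_lt_pow hmp0 hmp hP hD
    omega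
  refine ⟨fun hq => ?_, fun hq => ?_⟩
  · by_contra h0
    have hmp0 := Nat.pos_of_ne_zero h0
    exact hbig hmp0 (two_pow_clog_two_mul_le_of_three_le hq hmp0)
  · subst hq
    by_contra! h
    have hpow :=
      Nat.pow_le_pow_right two_pos (Nat.clog_le_of_le_pow (Nat.two_mul_le_two_pow_pred h))
    exact hbig (by omega) (by simpa using hpow)

/-- Claim 2 in the proof of Theorem 2.2: if L_m,q(m', ℘) attains the maximum M, then
m' = 0 when q > 2, and m' ≤ 3 when q = 2. -/
theorem max_Lfun_small_mp (f q m M : ℕ) (hf : 1 ≤ f) (hq : q = 2 ^ f) (hm : 1 ≤ m)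
    (hM : IsGreatest {L : ℕ | ∃ mp ≤ m, ∃ P : List (ℕ × Bool),
      IsSignedPartition (m - mp) P ∧ Lfun q mp P = L} M)
    (mp : ℕ) (hmp : mp ≤ m) (P : List (ℕ × Bool)) (hP : IsSignedPartition (m - mp) P)
    (hL : Lfun q mp P = M) :
    (2 < q → mp = 0) ∧ (q = 2 → mp ≤ 3) :=
  max_Lfun_small_mp_general q m M hM mp hmp P hP hL
end

section
/- Let m ≥ 1 be an integer and let q be a power of 2, and let M = max{ L_{m,q}(m', ℘) : m' ∈ {0, ..., m} and ℘ a signed partition of m - m' }. Suppose m' ∈ {0, ..., m} and ℘ = (d_1^{ε_1}, ..., d_ℓ^{ε_ℓ}) is a signed partition of m - m' with pairwise distinct parts (for i ≠ j one has (d_i, ε_i) ≠ (d_j, ε_j)) such that L_{m,q}(m', ℘) = M. Then for every two distinct indices i, j ∈ {1, ..., ℓ}, gcd(q^{d_i} - ε_i, q^{d_j} - ε_j) = 1. -/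
/-! If two distinct parts had non-coprime values, their common divisor would be odd (as `q` is
even), hence at least `3`, so the lcm of all values would be at most a third of their product.
For pairwise distinct parts that product is below `3 q^n` with `n = m - m'`: the factors
`q^d - 1` are below `q^d`, and the factors `q^d + 1` have distinct exponents, so their product
is at most `q^n ∏_{d ≥ 1} (1 + 2^{-d}) < e q^n`. The lcm would then be smaller than `q^n + 1`,
the lcm for the one-part signed partition `(n^{-1})`, contradicting maximality. -/

theorem lcm_cons_cons_mul_gcd_dvd_prod {α : Type*} [CommMonoidWithZero α] [NormalizedGCDMonoid α]
    (a b : α) (s : Multiset α) : (a ::ₘ b ::ₘ s).lcm * gcd a b ∣ (a ::ₘ b ::ₘ s).prod := by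
  have hlcm : (a ::ₘ b ::ₘ s).lcm ∣ lcm a b * s.prod := by
    rw [Multiset.lcm_cons, Multiset.lcm_cons]
    refine lcm_dvd ((dvd_lcm_left a b).mul_right _) (lcm_dvd ((dvd_lcm_right a b).mul_right _) ?_)
    exact (Multiset.lcm_dvd.2 fun x hx => Multiset.dvd_prod hx).mul_left _
  calc (a ::ₘ b ::ₘ s).lcm * gcd a b ∣ lcm a b * s.prod * gcd a b := mul_dvd_mul_right hlcm _
    _ = gcd a b * lcm a b * s.prod := by rw [mul_right_comm, mul_comm (lcm a b)]
    _ ∣ a * b * s.prod := mul_dvd_mul_right (gcd_mul_lcm a b).dvd _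
    _ = (a ::ₘ b ::ₘ s).prod := by rw [Multiset.prod_cons, Multiset.prod_cons, mul_assoc]

theorem prod_one_add_inv_pow_lt_three {q : ℝ} (hq : 2 ≤ q) {T : Finset ℕ} (hT : 0 ∉ T) :
    ∏ d ∈ T, (1 + (q ^ d)⁻¹) < 3 := by
  have hgeom : ∑ d ∈ insert 0 T, (1 / 2 : ℝ) ^ d ≤ 2 :=
    (summable_geometric_two.sum_le_tsum _ fun _ _ => by positivity).trans_eq tsum_geometric_two
  rw [Finset.sum_insert hT, pow_zero] at hgeom
  have hsum : ∑ d ∈ T, (q ^ d)⁻¹ ≤ 1 := by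
    calc ∑ d ∈ T, (q ^ d)⁻¹ ≤ ∑ d ∈ T, (1 / 2 : ℝ) ^ d := Finset.sum_le_sum fun d _ => by
          rw [one_div, inv_pow]
          exact inv_anti₀ (by positivity) (pow_le_pow_left₀ (by norm_num) hq d)
      _ ≤ 1 := by linarith
  calc ∏ d ∈ T, (1 + (q ^ d)⁻¹)
      ≤ Real.exp (∑ d ∈ T, (q ^ d)⁻¹) :=
        Real.prod_one_add_le_exp_sum T fun d => inv_nonneg.2 (pow_nonneg (by linarith) d)
    _ ≤ Real.exp 1 := Real.exp_le_exp.2 hsum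
    _ < 3 := Real.exp_one_lt_d9.trans (by norm_num)

theorem prod_pow_add_one_le_three_mul {ι : Type*} {q : ℕ} (hq : 2 ≤ q) {s : Finset ι}
    {d : ι → ℕ} (hd : ∀ i ∈ s, d i ≠ 0) (hinj : Set.InjOn d s) :
    ∏ i ∈ s, (q ^ d i + 1) ≤ 3 * q ^ ∑ i ∈ s, d i := by
  classical
  rw [← Finset.prod_image (f := fun e => q ^ e + 1) hinj,
    ← Finset.sum_image (f := fun e => e) hinj]
  have hT : 0 ∉ s.image d := by simpa using hd
  have hq' : (2 : ℝ) ≤ q := by exact_mod_cast hq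
  have hfactor : ∀ e : ℕ, (q : ℝ) ^ e + 1 = q ^ e * (1 + ((q : ℝ) ^ e)⁻¹) := fun e => by
    have : (q : ℝ) ^ e ≠ 0 := by positivity
    field_simp
  have hreal : ∏ e ∈ s.image d, ((q : ℝ) ^ e + 1) ≤ 3 * q ^ ∑ e ∈ s.image d, e := by
    simp_rw [hfactor, Finset.prod_mul_distrib]
    rw [Finset.prod_pow_eq_pow_sum]
    exact (mul_le_mul_of_nonneg_left (prod_one_add_inv_pow_lt_three hq' hT).le
      (by positivity)).trans_eq (mul_comm _ _)
  exact_mod_cast hreal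

theorem partVal_odd {q : ℕ} (hq : q ≠ 0) (heven : Even q) {p : ℕ × Bool} (hp : 0 < p.1) :
    Odd (partVal q p) := by
  have hpow : Even (q ^ p.1) := heven.pow_of_ne_zero hp.ne'
  unfold partVal
  split
  · exact Nat.Even.sub_odd (Nat.one_le_iff_ne_zero.2 (pow_ne_zero _ hq)) hpow odd_one
  · exact hpow.add_one

theorem prod_partVal_le_three_mul {q : ℕ} (hq : 2 ≤ q) {S : Finset (ℕ × Bool)}
    (hpos : ∀ p ∈ S, 0 < p.1) : ∏ p ∈ S, partVal q p ≤ 3 * q ^ ∑ p ∈ S, p.1 := by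
  rw [← Finset.prod_filter_mul_prod_filter_not S (·.2),
    ← Finset.sum_filter_add_sum_filter_not S (·.2), pow_add]
  have hplus : ∏ p ∈ S with p.2, partVal q p ≤ q ^ ∑ p ∈ S with p.2, p.1 := by
    rw [← Finset.prod_pow_eq_pow_sum]
    exact Finset.prod_le_prod' fun p hp => by simp [partVal, (Finset.mem_filter.1 hp).2]
  have hminus : ∏ p ∈ S with ¬p.2, partVal q p ≤ 3 * q ^ ∑ p ∈ S with ¬p.2, p.1 := by
    rw [Finset.prod_congr rfl fun p hp => show partVal q p = q ^ p.1 + 1 by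
      simp [partVal, (Finset.mem_filter.1 hp).2]]
    refine prod_pow_add_one_le_three_mul hq (fun p hp => (hpos p (Finset.mem_filter.1 hp).1).ne')
      fun a ha b hb hab => Prod.ext hab ?_
    simp only [Finset.coe_filter, Set.mem_ofPred_eq, Bool.not_eq_true] at ha hb
    rw [ha.2, hb.2]
  calc (∏ p ∈ S with p.2, partVal q p) * ∏ p ∈ S with ¬p.2, partVal q p
      ≤ q ^ (∑ p ∈ S with p.2, p.1) * (3 * q ^ ∑ p ∈ S with ¬p.2, p.1) :=
        Nat.mul_le_mul hplus hminus
    _ = 3 * (q ^ (∑ p ∈ S with p.2, p.1) * q ^ ∑ p ∈ S with ¬p.2, p.1) := by ring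

theorem foldr_lcm_partVal_le_pow_sum {q : ℕ} (hq : 2 ≤ q) (heven : Even q)
    {P : List (ℕ × Bool)} (hnd : P.Nodup) (hpos : ∀ p ∈ P, 0 < p.1) {p r : ℕ × Bool}
    (hp : p ∈ P) (hr : r ∈ P) (hpr : p ≠ r) (hgcd : Nat.gcd (partVal q p) (partVal q r) ≠ 1) :
    (P.map (partVal q)).foldr Nat.lcm 1 ≤ q ^ (P.map Prod.fst).sum := by
  set g := Nat.gcd (partVal q p) (partVal q r)
  obtain ⟨t, ht⟩ : ∃ t, P.Perm (p :: r :: t) :=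
    ⟨_, (List.perm_cons_erase hp).trans
      (.cons _ (List.perm_cons_erase ((List.mem_erase_of_ne hpr.symm).2 hr)))⟩
  have hodd : Odd g := (partVal_odd (by omega) heven (hpos p hp)).of_dvd_nat (Nat.gcd_dvd_left _ _)
  have hg : 3 ≤ g := by
    obtain ⟨k, hk⟩ := hodd
    omega
  have hdvd : (P.map (partVal q)).foldr Nat.lcm 1 * g ∣ (P.map (partVal q)).prod := by
    have hmap : ((P.map (partVal q) : List ℕ) : Multiset ℕ) =
        partVal q p ::ₘ partVal q r ::ₘ (t.map (partVal q) : Multiset ℕ) :=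
      Multiset.coe_eq_coe.2 (ht.map (partVal q))
    have h := lcm_cons_cons_mul_gcd_dvd_prod (partVal q p) (partVal q r) (t.map (partVal q))
    rwa [← hmap] at h
  have hprod : (P.map (partVal q)).prod ≤ 3 * q ^ (P.map Prod.fst).sum := by
    rw [← List.prod_toFinset _ hnd, ← List.sum_toFinset _ hnd]
    exact prod_partVal_le_three_mul hq fun p hp => hpos p (List.mem_toFinset.1 hp)
  have hprod_pos : 0 < (P.map (partVal q)).prod :=
    List.prod_pos fun x hx => by
      obtain ⟨p, hp, rfl⟩ := List.mem_map.1 hx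
      exact (partVal_odd (by omega) heven (hpos p hp)).pos
  have hthree : (P.map (partVal q)).foldr Nat.lcm 1 * 3 ≤ 3 * q ^ (P.map Prod.fst).sum :=
    calc _ ≤ (P.map (partVal q)).foldr Nat.lcm 1 * g := Nat.mul_le_mul_left _ hg
      _ ≤ (P.map (partVal q)).prod := Nat.le_of_dvd hprod_pos hdvd
      _ ≤ 3 * q ^ (P.map Prod.fst).sum := hprod
  omega

theorem max_Lfun_parts_coprime_general (f q m M : ℕ) (hf : 1 ≤ f) (hq : q = 2 ^ f)
    (hM : IsGreatest {L : ℕ | ∃ mp ≤ m, ∃ P : List (ℕ × Bool),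
      IsSignedPartition (m - mp) P ∧ Lfun q mp P = L} M)
    (mp : ℕ) (hmp : mp ≤ m) (P : List (ℕ × Bool)) (hP : IsSignedPartition (m - mp) P)
    (hnd : ∀ i j : Fin P.length, i ≠ j → P.get i ≠ P.get j)
    (hL : Lfun q mp P = M) :
    ∀ i j : Fin P.length, i ≠ j →
      Nat.gcd (partVal q (P.get i)) (partVal q (P.get j)) = 1 := by
  intro i j hij
  by_contra hgcd
  have hq2 : 2 ≤ q := hq ▸ Nat.le_self_pow (by omega) 2
  have heven : Even q := hq ▸ even_two.pow_of_ne_zero (by omega)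
  have hnodup : P.Nodup :=
    List.nodup_iff_injective_get.2 fun a b hab => by_contra fun h => hnd a b h hab
  have hlcm := foldr_lcm_partVal_le_pow_sum hq2 heven hnodup hP.1 (P.get_mem i) (P.get_mem j)
    (hnd i j hij) hgcd
  rw [hP.2] at hlcm
  have hn : 0 < m - mp := hP.2 ▸ (hP.1 _ (P.get_mem i)).trans_le
    (List.le_sum_of_mem (List.mem_map_of_mem (P.get_mem i)))
  have hsingle : IsSignedPartition (m - mp) [(m - mp, false)] := by
    simp [IsSignedPartition, hn]
  have hle := hM.2 ⟨mp, hmp, _, hsingle, rfl⟩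
  rw [← hL] at hle
  simp only [Lfun, partVal, List.map_cons, List.map_nil, List.foldr_cons, List.foldr_nil,
    Nat.lcm_one_right, Bool.false_eq_true, if_false] at hle
  have := Nat.le_of_mul_le_mul_left hle (by positivity)
  omega

/-- Claim 3 in the proof of Theorem 2.2: if L_m,q(m', ℘) attains the maximum M and the
parts of ℘ are pairwise distinct, then the numbers q^(d_i) - ε_i are pairwise coprime. -/
theorem max_Lfun_parts_coprime (f q m M : ℕ) (hf : 1 ≤ f) (hq : q = 2 ^ f) (hm : 1 ≤ m)
    (hM : IsGreatest {L : ℕ | ∃ mp ≤ m, ∃ P : List (ℕ × Bool),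
      IsSignedPartition (m - mp) P ∧ Lfun q mp P = L} M)
    (mp : ℕ) (hmp : mp ≤ m) (P : List (ℕ × Bool)) (hP : IsSignedPartition (m - mp) P)
    (hnd : ∀ i j : Fin P.length, i ≠ j → P.get i ≠ P.get j)
    (hL : Lfun q mp P = M) :
    ∀ i j : Fin P.length, i ≠ j →
      Nat.gcd (partVal q (P.get i)) (partVal q (P.get j)) = 1 :=
  max_Lfun_parts_coprime_general f q m M hf hq hM mp hmp P hP hnd hL
end
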